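/- Let (X,0) be a pointed convex Boolean metric space over a Boolean ring B such that every element of X is a convex combination of 0, x₁,…,xₙ, and suppose that x₁,…,x_s are pairwise orthogonal and nonzero (for some s ≤ n). Then there exist a_{s+1},…,aₙ ∈ B such that the set {x₁,…,x_s, a_{s+1}x_{s+1},…,aₙxₙ} \ {0} is a referential of (X,0). -/

import Mathlib

/-!
The points `x_{s+1}, …, x_n` are made orthogonal to their predecessors one at a time. Let the
`g_i` (`i ∈ I`) be pairwise orthogonal and `x = g_K`. The element `e_i = d(x,0) (1 + d(x,g_i))`
is where `x` coincides with `g_i` and is nonzero, so orthogonality makes the `e_i` pairwise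
disjoint. With `q = 1 + ∑ e_i` the point `q x` is orthogonal to every `g_i`, and `x` is the convex
combination of the `g_i` and `q x` with coefficients `e_i` and `q`. Substituting this expression
for `x` into convex combinations shows that the family stays generating when `g_K` is replaced
by `q x`.
-/

/-- The order on a Boolean ring: `a ≤ b` iff `a * b = a`. -/
def ble {B : Type} [BooleanRing B] (a b : B) : Prop := a * b = a

/-- The join on a Boolean ring: `a ∨ b = a + b + a * b`. -/
def bjoin {B : Type} [BooleanRing B] (a b : B) : B := a + b + a * b

/-- A Boolean metric space over a Boolean ring `B`: `d x y = 0` iff `x = y`,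
`d` is symmetric, and `d x z ≤ d x y ∨ d y z`. -/
structure BooleanMetric (B : Type) [BooleanRing B] (X : Type) where
  d : X → X → B
  d_eq_zero : ∀ x y, d x y = 0 ↔ x = y
  d_symm : ∀ x y, d x y = d y x
  d_tri : ∀ x y z, ble (d x z) (bjoin (d x y) (d y z))

/-- The coefficients `a i` have pairwise zero products. -/
def PairwiseOrthCoeffs {B : Type} [BooleanRing B] {k : ℕ} (a : Fin k → B) : Prop :=
  ∀ i j, i ≠ j → a i * a j = 0

/-- `x` is a convex combination of `x₁, …, xₖ` with coefficients `a₁, …, aₖ`,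
i.e. `aᵢ · d(x, xᵢ) = 0` for all `i`. -/
def IsConvComb {B X : Type} [BooleanRing B] (m : BooleanMetric B X) {k : ℕ}
    (a : Fin k → B) (xs : Fin k → X) (x : X) : Prop :=
  ∀ i, a i * m.d x (xs i) = 0

/-- A subset `S` is convex: every convex combination of points of `S` (with pairwise
disjoint coefficients summing to `1`) exists in `S`. -/
def IsConvexSubspace {B X : Type} [BooleanRing B] (m : BooleanMetric B X) (S : Set X) : Prop :=
  ∀ (k : ℕ) (a : Fin k → B) (xs : Fin k → X), (∀ i, xs i ∈ S) →
    PairwiseOrthCoeffs a → (∑ i, a i) = 1 → ∃ x ∈ S, IsConvComb m a xs x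

/-- A subset `S` is a CFG-space: it is convex and there are finitely many points of `S`
of which every point of `S` is a convex combination. -/
def IsCFGSubspace {B X : Type} [BooleanRing B] (m : BooleanMetric B X) (S : Set X) : Prop :=
  IsConvexSubspace m S ∧
  ∃ (k : ℕ) (xs : Fin k → X), (∀ i, xs i ∈ S) ∧
    ∀ x ∈ S, ∃ a : Fin k → B, PairwiseOrthCoeffs a ∧ (∑ i, a i) = 1 ∧ IsConvComb m a xs x

/-- A contractive map: `d(f x, f y) ≤ d(x, y)`. -/
def Contractive {B X Y : Type} [BooleanRing B] (mX : BooleanMetric B X) (mY : BooleanMetric B Y)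
    (f : X → Y) : Prop :=
  ∀ x y, ble (mY.d (f x) (f y)) (mX.d x y)

/-- `sm a x` is the convex combination `a x + (a+1) 0` of `x` and the base point `z`
with coefficients `a` and `a + 1`. -/
def IsScalarMul {B X : Type} [BooleanRing B] (m : BooleanMetric B X) (z : X)
    (sm : B → X → X) : Prop :=
  ∀ a x, a * m.d (sm a x) x = 0 ∧ (a + 1) * m.d (sm a x) z = 0

/-- `x ⊥ y`, i.e. `x ⋆ y = (d(x,y)+1) x = 0`. -/
def Orth {B X : Type} [BooleanRing B] (m : BooleanMetric B X) (z : X) (sm : B → X → X)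
    (x y : X) : Prop :=
  sm (m.d x y + 1) x = z

/-- `x` is the convex combination of `0, x₁, …, xₖ` with coefficients
`a₀ = 1 + a₁ + ⋯ + aₖ, a₁, …, aₖ`. -/
def ConvCombWithZero {B X : Type} [BooleanRing B] (m : BooleanMetric B X) (z : X) {k : ℕ}
    (a : Fin k → B) (xs : Fin k → X) (x : X) : Prop :=
  PairwiseOrthCoeffs a ∧ (∀ i, a i * m.d x (xs i) = 0) ∧ (1 + ∑ i, a i) * m.d x z = 0

/-- `x₁, …, xₖ` is a referential of `(X, z)`: the `xᵢ` are nonzero, pairwise orthogonal,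
and every point of `X` is a convex combination of `0, x₁, …, xₖ`. -/
def IsReferential {B X : Type} [BooleanRing B] (m : BooleanMetric B X) (z : X)
    (sm : B → X → X) {k : ℕ} (xs : Fin k → X) : Prop :=
  (∀ i, xs i ≠ z) ∧ (∀ i j, i ≠ j → Orth m z sm (xs i) (xs j)) ∧
  ∀ x : X, ∃ a : Fin k → B, ConvCombWithZero m z a xs x

/-- The whole space is a convex closure of the subset `S`: it is convex and every point
is a convex combination of points of `S`. -/
def IsConvexClosure {B X : Type} [BooleanRing B] (m : BooleanMetric B X) (S : Set X) : Prop :=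
  IsConvexSubspace m Set.univ ∧
  ∀ x : X, ∃ (k : ℕ) (a : Fin k → B) (xs : Fin k → X),
    (∀ i, xs i ∈ S) ∧ PairwiseOrthCoeffs a ∧ (∑ i, a i) = 1 ∧ IsConvComb m a xs x

/-- A finite set `R` is a referential of `(X, z)` (set version). -/
def IsReferentialSet {B X : Type} [BooleanRing B] (m : BooleanMetric B X) (z : X)
    (sm : B → X → X) (R : Finset X) : Prop :=
  z ∉ R ∧ (∀ x ∈ R, ∀ y ∈ R, x ≠ y → Orth m z sm x y) ∧
  ∀ u : X, ∃ a : X → B,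
    (∀ x ∈ R, ∀ y ∈ R, x ≠ y → a x * a y = 0) ∧
    (∀ x ∈ R, a x * m.d u x = 0) ∧ (1 + ∑ x ∈ R, a x) * m.d u z = 0


open Function

namespace BooleanMetric

variable {B X : Type} [BooleanRing B] (m : BooleanMetric B X)

lemma d_self (x : X) : m.d x x = 0 := (m.d_eq_zero x x).2 rfl

lemma mul_d_eq_of_mul_d_eq_zero {c : B} {u x : X} (h : c * m.d u x = 0) (w : X) :
    c * m.d u w = c * m.d x w := by
  have hux : m.d u w * (m.d u x + m.d x w + m.d u x * m.d x w) = m.d u w := m.d_tri u x w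
  have hxu : m.d x w * (m.d x u + m.d u w + m.d x u * m.d u w) = m.d x w := m.d_tri x u w
  rw [m.d_symm x u] at hxu
  linear_combination (-c) * hux + c * hxu + m.d u w * h - m.d x w * h

end BooleanMetric

namespace ConvCombWithZero

variable {B X : Type} [BooleanRing B] {m : BooleanMetric B X} {z : X} {n : ℕ}

lemma subst {g : Fin n → X} {K : Fin n} {y u : X} {b c : Fin n → B}
    (hu : ConvCombWithZero m z b g u)
    (hK : ConvCombWithZero m z c (update g K y) (g K)) :
    ConvCombWithZero m z (fun i => update b K 0 i + b K * c i) (update g K y) u := by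
  obtain ⟨hb, hbd, hbz⟩ := hu
  obtain ⟨hc, hcd, hcz⟩ := hK
  have hbK (i : Fin n) : update b K 0 i * b K = 0 := by
    rcases eq_or_ne i K with rfl | hi
    · simp
    · rw [update_of_ne hi]; exact hb i K hi
  refine ⟨fun i j hij => ?_, fun i => ?_, ?_⟩
  · have hbb : update b K 0 i * update b K 0 j = 0 := by
      rcases eq_or_ne i K with rfl | hi
      · simp
      rcases eq_or_ne j K with rfl | hj
      · simp
      rw [update_of_ne hi, update_of_ne hj]; exact hb i j hij
    linear_combination hbb + c j * hbK i + c i * hbK j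
      + c i * c j * BooleanRing.mul_self (b K) + b K * hc i j hij
  · have hbi : update b K 0 i * m.d u (update g K y i) = 0 := by
      rcases eq_or_ne i K with rfl | hi
      · simp
      · rw [update_of_ne hi, update_of_ne hi]; exact hbd i
    linear_combination hbi + c i * m.mul_d_eq_of_mul_d_eq_zero (hbd K) _ + b K * hcd i
  · have hsum : ∑ i, update b K 0 i + b K = ∑ i, b i := by
      rw [Finset.sum_update_of_mem (Finset.mem_univ K),
        Finset.sum_eq_add_sum_sdiff_singleton_of_mem (Finset.mem_univ K)]
      ring
    rw [Finset.sum_add_distrib, ← Finset.mul_sum]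
    linear_combination hbz + (1 + ∑ i, c i) * m.mul_d_eq_of_mul_d_eq_zero (hbd K) z
      + b K * hcz + m.d u z * hsum - b K * m.d u z * BooleanRing.add_self (1 : B)

end ConvCombWithZero

def GeneratesWithZero {B X : Type} [BooleanRing B] (m : BooleanMetric B X) (z : X) {n : ℕ}
    (g : Fin n → X) : Prop :=
  ∀ u : X, ∃ b : Fin n → B, ConvCombWithZero m z b g u

namespace IsScalarMul

variable {B X : Type} [BooleanRing B] {m : BooleanMetric B X} {z : X} {sm : B → X → X}

lemma d_smul_base (hsm : IsScalarMul m z sm) (a : B) (x : X) :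
    m.d (sm a x) z = a * m.d x z := by
  obtain ⟨hx, hz⟩ := hsm a x
  linear_combination hz - m.mul_d_eq_of_mul_d_eq_zero hx z
    - a * m.d x z * BooleanRing.add_self (1 : B)

lemma eq_smul (hsm : IsScalarMul m z sm) {c : B} {u : X} (x : X)
    (hx : c * m.d u x = 0) (hz : (c + 1) * m.d u z = 0) : u = sm c x := by
  obtain ⟨hvx, -⟩ := hsm c x
  have hc : c * m.d u (sm c x) = 0 := by
    linear_combination m.mul_d_eq_of_mul_d_eq_zero hx (sm c x)
      + m.d_symm x (sm c x) * c + hvx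
  have hc' : (c + 1) * m.d u (sm c x) = 0 := by
    linear_combination m.mul_d_eq_of_mul_d_eq_zero hz (sm c x)
      + (c + 1) * m.d_symm z (sm c x) + (c + 1) * hsm.d_smul_base c x
      + m.d x z * BooleanRing.mul_one_add_self c
  refine (m.d_eq_zero _ _).1 ?_
  linear_combination hc + hc' - c * m.d u (sm c x) * BooleanRing.add_self (1 : B)

lemma one_smul (hsm : IsScalarMul m z sm) (x : X) : sm 1 x = x :=
  (hsm.eq_smul x (by rw [m.d_self, mul_zero]) (by rw [BooleanRing.add_self, zero_mul])).symm

lemma smul_smul (hsm : IsScalarMul m z sm) (a b : B) (x : X) :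
    sm a (sm b x) = sm (a * b) x := by
  obtain ⟨ha, -⟩ := hsm a (sm b x)
  obtain ⟨hb, -⟩ := hsm b x
  refine hsm.eq_smul x ?_ ?_
  · linear_combination m.mul_d_eq_of_mul_d_eq_zero (c := a * b) (by linear_combination b * ha) x
      + a * hb
  · rw [hsm.d_smul_base, hsm.d_smul_base]
    linear_combination m.d x z * BooleanRing.mul_one_add_self (a * b)

lemma orth_iff (hsm : IsScalarMul m z sm) (x y : X) :
    Orth m z sm x y ↔ (m.d x y + 1) * m.d x z = 0 := by
  constructor
  · intro h
    have hxy := (hsm (m.d x y + 1) x).1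
    unfold Orth at h
    rwa [h, m.d_symm z x] at hxy
  · intro h
    refine (hsm.eq_smul x ?_ ?_).symm
    · rwa [m.d_symm z x]
    · rw [m.d_self, mul_zero]

lemma orth_symm (hsm : IsScalarMul m z sm) {x y : X} (h : Orth m z sm x y) :
    Orth m z sm y x := by
  rw [hsm.orth_iff] at h ⊢
  linear_combination m.mul_d_eq_of_mul_d_eq_zero (c := m.d y x + 1)
      (by rw [m.d_symm y x]; linear_combination BooleanRing.mul_one_add_self (m.d x y)) z
    + m.d_symm y x * m.d x z + h

lemma orth_smul_of_mul_eq_zero (hsm : IsScalarMul m z sm) {c : B} {x y : X}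
    (h : c * (m.d x z * (m.d x y + 1)) = 0) : Orth m z sm (sm c x) y := by
  rw [hsm.orth_iff, hsm.d_smul_base]
  linear_combination m.d x z * m.mul_d_eq_of_mul_d_eq_zero (hsm c x).1 y + h

lemma mul_eq_zero_of_orth (hsm : IsScalarMul m z sm) (x : X) {y w : X}
    (h : Orth m z sm y w) :
    (m.d x z * (m.d x y + 1)) * (m.d x z * (m.d x w + 1)) = 0 := by
  have hxy : (m.d x y + 1) * m.d x y = 0 := by
    linear_combination BooleanRing.mul_one_add_self (m.d x y)
  have hxw : (m.d x w + 1) * m.d x w = 0 := by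
    linear_combination BooleanRing.mul_one_add_self (m.d x w)
  have hz := m.mul_d_eq_of_mul_d_eq_zero hxy z
  have hw := m.mul_d_eq_of_mul_d_eq_zero hxy w
  rw [hsm.orth_iff] at h
  linear_combination (m.d x y + 1) * (m.d x w + 1) * BooleanRing.mul_self (m.d x z)
    + (m.d x w + 1) * hz + (m.d x w + 1) * (m.d x y + 1) * h
    + m.d y z * (m.d x w + 1) * hw - (m.d x y + 1) * m.d y z * hxw

theorem exists_update_smul_pairwise_orth (hsm : IsScalarMul m z sm) {n : ℕ} {g : Fin n → X}
    (hg : GeneratesWithZero m z g) {I : Finset (Fin n)}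
    (hI : (I : Set (Fin n)).Pairwise (Orth m z sm on g))
    {K : Fin n} (hK : K ∉ I) :
    ∃ q : B,
      (insert K (I : Set (Fin n))).Pairwise (Orth m z sm on update g K (sm q (g K))) ∧
      GeneratesWithZero m z (update g K (sm q (g K))) := by
  set x := g K
  set e : Fin n → B := fun i => m.d x z * (m.d x (g i) + 1)
  set q := 1 + ∑ i ∈ I, e i
  have he : ∀ i ∈ I, ∀ j ∈ I, i ≠ j → e i * e j = 0 := fun i hi j hj hij =>
    hsm.mul_eq_zero_of_orth x (hI hi hj hij)
  have hqe : ∀ i ∈ I, q * e i = 0 := by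
    intro i hi
    rw [add_mul, one_mul, Finset.sum_mul,
      Finset.sum_eq_single_of_mem i hi (fun j hj hji => he j hj i hi hji),
      BooleanRing.mul_self, BooleanRing.add_self]
  have horth : ∀ i ∈ I, Orth m z sm (sm q x) (g i) := fun i hi =>
    hsm.orth_smul_of_mul_eq_zero (hqe i hi)
  have hupdate : ∀ i ∈ I, update g K (sm q x) i = g i := fun i hi =>
    update_of_ne (ne_of_mem_of_not_mem hi hK) _ _
  have hx : ConvCombWithZero m z (Pi.single K q + fun i => if i ∈ I then e i else 0)
      (update g K (sm q x)) x := by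
    refine ⟨fun i j hij => ?_, fun i => ?_, ?_⟩
    · rcases eq_or_ne i K with rfl | hiK
      · have hjK := hij.symm
        by_cases hj : j ∈ I <;> simp [hK, hj, hjK, hqe]
      rcases eq_or_ne j K with rfl | hjK
      · by_cases hi : i ∈ I <;> simp [hK, hi, hiK, mul_comm _ q, hqe]
      by_cases hi : i ∈ I <;> by_cases hj : j ∈ I <;> simp [hi, hj, hiK, hjK, he, hij]
    · rcases eq_or_ne i K with rfl | hiK
      · simpa [hK, m.d_symm x] using (hsm q x).1
      · by_cases hi : i ∈ I
        · simp only [Pi.add_apply, Pi.single_eq_of_ne hiK, hi, if_true, zero_add,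
            update_of_ne hiK, e]
          linear_combination m.d x z * BooleanRing.mul_one_add_self (m.d x (g i))
        · simp [hi, hiK]
    · simp only [Pi.add_apply, Finset.sum_add_distrib, Finset.sum_pi_single', Finset.mem_univ,
        if_true, Finset.sum_ite_mem, Finset.univ_inter]
      rw [show 1 + (q + ∑ i ∈ I, e i) = 0 by
        linear_combination BooleanRing.add_self (1 + ∑ i ∈ I, e i), zero_mul]
  refine ⟨q, ?_, fun u => ?_⟩
  · rw [Set.pairwise_insert]
    refine ⟨fun i hi j hj hij => ?_, fun i hi _ => ?_⟩
    · simp only [onFun, hupdate i hi, hupdate j hj]; exact hI hi hj hij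
    · rw [onFun, onFun, update_self, hupdate i hi]
      exact ⟨horth i hi, hsm.orth_symm (horth i hi)⟩
  · obtain ⟨b, hb⟩ := hg u
    exact ⟨_, hb.subst hx⟩

theorem exists_smul_pairwise_orth (hsm : IsScalarMul m z sm) {n : ℕ} {g : Fin n → X}
    (hg : GeneratesWithZero m z g) {I : Finset (Fin n)}
    (hI : (I : Set (Fin n)).Pairwise (Orth m z sm on g))
    (J : Finset (Fin n)) (hIJ : Disjoint I J) :
    ∃ a : Fin n → B, (∀ i ∉ J, a i = 1) ∧
      ((I ∪ J : Finset (Fin n)) : Set (Fin n)).Pairwise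
        (Orth m z sm on fun i => sm (a i) (g i)) ∧
      GeneratesWithZero m z (fun i => sm (a i) (g i)) := by
  induction J using Finset.induction_on with
  | empty => exact ⟨fun _ => 1, fun _ _ => rfl, by simpa [hsm.one_smul] using hI,
      by simpa [hsm.one_smul] using hg⟩
  | insert K J hKJ ih =>
    obtain ⟨hK, hIJ⟩ := Finset.disjoint_insert_right.1 hIJ
    obtain ⟨a, ha, horth, hgen⟩ := ih hIJ
    obtain ⟨q, horth', hgen'⟩ := hsm.exists_update_smul_pairwise_orth hgen horth
      (K := K) (by simp [hK, hKJ])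
    have hfun : (fun i => sm (update a K (q * a K) i) (g i)) =
        update (fun i => sm (a i) (g i)) K (sm q (sm (a K) (g K))) := by
      funext i
      rcases eq_or_ne i K with rfl | hiK
      · simp [hsm.smul_smul]
      · simp [hiK]
    refine ⟨update a K (q * a K), fun i hi => ?_, ?_, ?_⟩
    · rw [Finset.mem_insert, not_or] at hi
      rw [update_of_ne hi.1]
      exact ha i hi.2
    · rw [hfun, Finset.union_insert, Finset.coe_insert]
      exact horth'
    · rw [hfun]
      exact hgen'

end IsScalarMul

theorem isReferentialSet_image_erase {B X : Type} [BooleanRing B] [DecidableEq X]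
    {m : BooleanMetric B X} {z : X} {sm : B → X → X} {n : ℕ} {g : Fin n → X}
    (horth : Pairwise (Orth m z sm on g)) (hg : GeneratesWithZero m z g) :
    IsReferentialSet m z sm ((Finset.univ.image g).erase z) := by
  refine ⟨Finset.notMem_erase z _, fun v hv w hw hvw => ?_, fun u => ?_⟩
  · obtain ⟨i, -, rfl⟩ := Finset.mem_image.1 (Finset.mem_of_mem_erase hv)
    obtain ⟨j, -, rfl⟩ := Finset.mem_image.1 (Finset.mem_of_mem_erase hw)
    exact horth fun hij => hvw (hij ▸ rfl)
  obtain ⟨b, hb, hbd, hbz⟩ := hg u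
  have hbv (v : X) : (∑ i with g i = v, b i) * m.d u v = 0 := by
    rw [Finset.sum_mul]
    exact Finset.sum_eq_zero fun i hi => (Finset.mem_filter.1 hi).2 ▸ hbd i
  refine ⟨fun v => ∑ i with g i = v, b i, fun v _ w _ hvw => ?_, fun v _ => hbv v, ?_⟩
  · rw [Finset.sum_mul_sum]
    refine Finset.sum_eq_zero fun i hi => Finset.sum_eq_zero fun j hj => hb i j fun hij => ?_
    rw [Finset.mem_filter] at hi hj
    exact hvw (hi.2.symm.trans (hij ▸ hj.2))
  · have hsum : (∑ v ∈ (Finset.univ.image g).erase z, ∑ i with g i = v, b i) * m.d u z =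
        (∑ i, b i) * m.d u z := by
      rw [Finset.sum_mul,
        Finset.sum_erase (f := fun v => (∑ i with g i = v, b i) * m.d u z) _ (hbv z),
        ← Finset.sum_mul, Finset.sum_fiberwise_of_maps_to fun i _ =>
          Finset.mem_image_of_mem g (Finset.mem_univ i)]
    rw [add_mul, hsum, ← add_mul]
    exact hbz

theorem stmt10_general {B X : Type} [BooleanRing B] [DecidableEq X] (m : BooleanMetric B X)
    (z : X) (sm : B → X → X) (hsm : IsScalarMul m z sm)
    {n : ℕ} (xs : Fin n → X)
    (hgen : ∀ x : X, ∃ a : Fin n → B, ConvCombWithZero m z a xs x)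
    (s : ℕ)
    (horth : ∀ i j : Fin n, (i : ℕ) < s → (j : ℕ) < s → i ≠ j → Orth m z sm (xs i) (xs j)) :
    ∃ a : Fin n → B, IsReferentialSet m z sm
      ((Finset.image (fun i : Fin n => if (i : ℕ) < s then xs i else sm (a i) (xs i))
        Finset.univ).erase z) := by
  obtain ⟨a, ha, horth', hgen'⟩ := hsm.exists_smul_pairwise_orth hgen
    (I := {i | (i : ℕ) < s})
    (fun i hi j hj => horth i j (by simpa using hi) (by simpa using hj))
    {i | ¬ (i : ℕ) < s} (Finset.disjoint_filter_filter_not _ _ _)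
  rw [Finset.filter_union_filter_not_eq, Finset.coe_univ, Set.pairwise_univ] at horth'
  have hfam : (fun i : Fin n => if (i : ℕ) < s then xs i else sm (a i) (xs i)) =
      fun i => sm (a i) (xs i) := by
    funext i
    split_ifs with hi
    · rw [ha i (by simpa using hi), hsm.one_smul]
    · rfl
  exact ⟨a, hfam ▸ isReferentialSet_image_erase horth' hgen'⟩

/-- Construction of referentials: if every point of `X` is a convex combination of
`0, x₁, …, xₙ` and `x₁, …, x_s` are pairwise orthogonal and nonzero, then there are
coefficients `aᵢ` such that `{x₁, …, x_s, a_{s+1}x_{s+1}, …, aₙxₙ} \ {0}` is a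
referential of `(X, 0)`. -/
theorem stmt10 {B X : Type} [BooleanRing B] [DecidableEq X] (m : BooleanMetric B X)
    (hconv : IsConvexSubspace m Set.univ) (z : X)
    (sm : B → X → X) (hsm : IsScalarMul m z sm)
    {n : ℕ} (xs : Fin n → X)
    (hgen : ∀ x : X, ∃ a : Fin n → B, ConvCombWithZero m z a xs x)
    (s : ℕ) (hs : s ≤ n)
    (horth : ∀ i j : Fin n, (i : ℕ) < s → (j : ℕ) < s → i ≠ j → Orth m z sm (xs i) (xs j))
    (hnz : ∀ i : Fin n, (i : ℕ) < s → xs i ≠ z) :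
    ∃ a : Fin n → B, IsReferentialSet m z sm
      ((Finset.image (fun i : Fin n => if (i : ℕ) < s then xs i else sm (a i) (xs i))
        Finset.univ).erase z) :=
  stmt10_general m z sm hsm xs hgen s horth
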